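/- Let t be any formal term built from a single ternary operation symbol w and variables, say with m variable slots, and let x₁,…,xₘ and y₁,…,yₘ be variables such that xᵢ ≠ yᵢ for every i = 1,…,m. Then the identity t(x₁,…,xₘ) ≈ t(y₁,…,yₘ) is not a consequence of the 3-wnu identities; that is, there exists an algebra with one ternary operation satisfying the 3-wnu identities, together with an assignment of the variables, under which t(x₁,…,xₘ) and t(y₁,…,yₘ) evaluate to different elements. -/
import Mathlib


/-- Formal terms built from variables in `V` and a single ternary operation symbol `w`. -/
inductive Term3 (V : Type) : Type
  | var : V → Term3 V
  | w : Term3 V → Term3 V → Term3 V → Term3 V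
deriving DecidableEq

/-- Evaluation of a term in an algebra `(B, f)` under a variable assignment `σ`. -/
def Term3.eval {V B : Type} (f : B → B → B → B) (σ : V → B) : Term3 V → B
  | .var v => σ v
  | .w a b c => f (a.eval f σ) (b.eval f σ) (c.eval f σ)

/-- Renaming/substitution of variables in a term. -/
def Term3.rename {V V' : Type} (ρ : V → V') : Term3 V → Term3 V'
  | .var v => .var (ρ v)
  | .w a b c => .w (a.rename ρ) (b.rename ρ) (c.rename ρ)

/-- A ternary operation `f` satisfies the 3-wnu identities:
`f(x,x,x) = x` and `f(x,x,y) = f(x,y,x) = f(y,x,x)`. -/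
def Is3WNU {B : Type} (f : B → B → B → B) : Prop :=
  (∀ x, f x x x = x) ∧ ∀ x y, f x x y = f x y x ∧ f x y x = f y x x

/-- Two terms are equal modulo the equational theory generated by the 3-wnu identities,
i.e. they evaluate equally in every algebra satisfying the 3-wnu identities. -/
def EqWnu3 {V : Type} (t s : Term3 V) : Prop :=
  ∀ (B : Type) (f : B → B → B → B) (σ : V → B), Is3WNU f → t.eval f σ = s.eval f σ

/-- The set `A` of 3-wnu normal forms (over the countably infinite variable set `ℕ`):
every variable is a normal form, and `w(a₁,a₂,a₃)` is a normal form whenever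
`a₁,a₂,a₃` are normal forms with `a₁ ≠ a₂` and `a₁ ≠ a₃`. -/
inductive IsNF3 : Term3 ℕ → Prop
  | var (n : ℕ) : IsNF3 (.var n)
  | w (a b c : Term3 ℕ) : IsNF3 a → IsNF3 b → IsNF3 c → a ≠ b → a ≠ c →
      IsNF3 (.w a b c)

/-- The normal-form operation `w^A`:
`w^A(a,a,a) = a`; `w^A(a,a,b) = w^A(a,b,a) = w^A(b,a,a) = w(b,a,a)` for `a ≠ b`;
and `w^A(a₁,a₂,a₃) = w(a₁,a₂,a₃)` for pairwise distinct `a₁,a₂,a₃`. -/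
def wA3 (a b c : Term3 ℕ) : Term3 ℕ :=
  if a = b then (if b = c then a else .w c a a)
  else if a = c then .w b a a
  else if b = c then .w a b b
  else .w a b c

/-- The subterm relation `⪯` on normal forms: the reflexive transitive closure of
`{(a,b) : a,b ∈ A, ∃ c d e ∈ A, b = w(c,d,e) ∧ a ∈ {c,d,e}}`. -/
def Sub3 (a b : Term3 ℕ) : Prop :=
  Relation.ReflTransGen
    (fun s t => IsNF3 s ∧ IsNF3 t ∧ ∃ c d e : Term3 ℕ,
      IsNF3 c ∧ IsNF3 d ∧ IsNF3 e ∧ t = .w c d e ∧ (s = c ∨ s = d ∨ s = e)) a b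

-- auxiliary lemmas

lemma wA3_is3WNU : Is3WNU wA3 := by
  constructor
  · intro x; simp [wA3]
  · intro a b
    by_cases h : a = b
    · subst h; simp [wA3]
    · simp [wA3, h, Ne.symm h]

lemma nf_wA3 {a b c : Term3 ℕ} (ha : IsNF3 a) (hb : IsNF3 b) (hc : IsNF3 c) :
    IsNF3 (wA3 a b c) := by
  unfold wA3
  split_ifs with h1 h2 h3 h4
  · exact ha
  · exact IsNF3.w _ _ _ hc ha ha (fun h => h2 (h1.symm.trans h.symm))
      (fun h => h2 (h1.symm.trans h.symm))
  · exact IsNF3.w _ _ _ hb ha ha (fun h => h1 h.symm) (fun h => h1 h.symm)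
  · exact IsNF3.w _ _ _ ha hb hb h1 h1
  · exact IsNF3.w _ _ _ ha hb hc h1 h3

lemma sub3_refl (a : Term3 ℕ) : Sub3 a a := Relation.ReflTransGen.refl

lemma sub3_trans {a b c : Term3 ℕ} (h1 : Sub3 a b) (h2 : Sub3 b c) : Sub3 a c :=
  Relation.ReflTransGen.trans h1 h2

lemma sub3_var {s : Term3 ℕ} {n : ℕ} (h : Sub3 s (.var n)) : s = .var n := by
  rcases Relation.ReflTransGen.cases_tail h with h | ⟨c, _, _, _, p, q, r, _, _, _, heq, _⟩
  · exact h.symm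
  · exact absurd heq (by simp)

lemma sub3_w {s p q r : Term3 ℕ} (h : Sub3 s (.w p q r)) :
    s = .w p q r ∨ Sub3 s p ∨ Sub3 s q ∨ Sub3 s r := by
  rcases Relation.ReflTransGen.cases_tail h with h | ⟨c, hc, _, _, p', q', r', _, _, _, heq, hmem⟩
  · exact Or.inl h.symm
  · injection heq with e1 e2 e3
    subst e1; subst e2; subst e3
    rcases hmem with rfl | rfl | rfl
    · exact Or.inr (Or.inl hc)
    · exact Or.inr (Or.inr (Or.inl hc))
    · exact Or.inr (Or.inr (Or.inr hc))

lemma sub3_comp {a b c : Term3 ℕ} (ha : IsNF3 a) (hb : IsNF3 b) (hc : IsNF3 c) :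
    Sub3 a (wA3 a b c) ∧ Sub3 b (wA3 a b c) ∧ Sub3 c (wA3 a b c) := by
  have step : ∀ {s p q r : Term3 ℕ}, IsNF3 s → IsNF3 p → IsNF3 q → IsNF3 r →
      IsNF3 (.w p q r) → (s = p ∨ s = q ∨ s = r) → Sub3 s (.w p q r) := by
    intro s p q r hs hp hq hr hw hmem
    exact Relation.ReflTransGen.single ⟨hs, hw, p, q, r, hp, hq, hr, rfl, hmem⟩
  have hnf := nf_wA3 ha hb hc
  unfold wA3 at hnf ⊢
  split_ifs at hnf ⊢ with h1 h2 h3 h4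
  · subst h1; subst h2; exact ⟨sub3_refl _, sub3_refl _, sub3_refl _⟩
  · subst h1
    exact ⟨step ha hc ha ha hnf (by tauto), step ha hc ha ha hnf (by tauto),
      step hc hc ha ha hnf (by tauto)⟩
  · subst h3
    exact ⟨step ha hb ha ha hnf (by tauto), step hb hb ha ha hnf (by tauto),
      step ha hb ha ha hnf (by tauto)⟩
  · subst h4
    exact ⟨step ha ha hb hb hnf (by tauto), step hb ha hb hb hnf (by tauto),
      step hb ha hb hb hnf (by tauto)⟩
  · exact ⟨step ha ha hb hc hnf (by tauto), step hb ha hb hc hnf (by tauto),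
      step hc ha hb hc hnf (by tauto)⟩

lemma noncollapse_eq {A B C A' B' C' : Term3 ℕ}
    (hL : ¬ (A = B ∧ B = C)) (hR : ¬ (A' = B' ∧ B' = C'))
    (h : wA3 A B C = wA3 A' B' C') : A = A' ∨ B = B' ∨ C = C' := by
  unfold wA3 at h
  split_ifs at h <;> simp_all <;> aesop

lemma eval_nf {V : Type} (t : Term3 V) (x : V → ℕ) :
    IsNF3 (t.eval wA3 (fun v => .var (x v))) := by
  induction t with
  | var v => exact IsNF3.var _
  | w a b c iha ihb ihc => exact nf_wA3 iha ihb ihc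

lemma key {V : Type} (t : Term3 V) (x y : V → ℕ) (hxy : ∀ i, x i ≠ y i) :
    ¬ Sub3 (t.eval wA3 (fun v => .var (x v))) (t.eval wA3 (fun v => .var (y v))) ∧
    ¬ Sub3 (t.eval wA3 (fun v => .var (y v))) (t.eval wA3 (fun v => .var (x v))) := by
  induction t with
  | var v =>
    constructor <;> intro h <;> have := sub3_var h <;>
      simp only [Term3.eval, Term3.var.injEq] at this
    · exact hxy v this
    · exact hxy v this.symm
  | w a b c iha ihb ihc =>
    set A := a.eval wA3 (fun v => .var (x v)) with hAdef
    set B := b.eval wA3 (fun v => .var (x v)) with hBdef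
    set C := c.eval wA3 (fun v => .var (x v)) with hCdef
    set A' := a.eval wA3 (fun v => .var (y v)) with hA'def
    set B' := b.eval wA3 (fun v => .var (y v)) with hB'def
    set C' := c.eval wA3 (fun v => .var (y v)) with hC'def
    have hnfA : IsNF3 A := eval_nf a x
    have hnfB : IsNF3 B := eval_nf b x
    have hnfC : IsNF3 C := eval_nf c x
    have hnfA' : IsNF3 A' := eval_nf a y
    have hnfB' : IsNF3 B' := eval_nf b y
    have hnfC' : IsNF3 C' := eval_nf c y
    -- the symmetric core argument
    have core : ∀ (A B C A' B' C' : Term3 ℕ),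
        IsNF3 A → IsNF3 B → IsNF3 C → IsNF3 A' → IsNF3 B' → IsNF3 C' →
        (¬ Sub3 A A') → (¬ Sub3 A' A) →
        (¬ Sub3 B B') → (¬ Sub3 B' B) →
        (¬ Sub3 C C') → (¬ Sub3 C' C) →
        ¬ Sub3 (wA3 A B C) (wA3 A' B' C') := by
      clear * -
      intro A B C A' B' C' hnfA hnfB hnfC hnfA' hnfB' hnfC'
      intro haa' ha'a hbb' hb'b hcc' hc'c hsub
      obtain ⟨hsA, hsB, hsC⟩ := sub3_comp hnfA hnfB hnfC
      obtain ⟨hsA', hsB', hsC'⟩ := sub3_comp hnfA' hnfB' hnfC'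
      -- decompose Sub3 (wA3 A B C) (wA3 A' B' C')
      by_cases hR : A' = B' ∧ B' = C'
      · -- right collapses: wA3 A' B' C' = A'
        obtain ⟨e1, e2⟩ := hR
        have hQ : wA3 A' B' C' = A' := by
          subst e1; subst e2; simp [wA3]
        rw [hQ] at hsub
        by_cases hL : A = B ∧ B = C
        · obtain ⟨rfl1, rfl2⟩ := hL
          have hP : wA3 A B C = A := by subst rfl1; subst rfl2; simp [wA3]
          rw [hP] at hsub
          exact haa' hsub
        · -- left does not collapse; A ⪯ wA3 A B C ⪯ A'
          exact haa' (sub3_trans hsA hsub)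
      · -- right does not collapse: wA3 A' B' C' = .w p q r for some comps
        have hQw : ∃ p q r : Term3 ℕ, wA3 A' B' C' = .w p q r ∧
            ((p = A' ∨ p = B' ∨ p = C') ∧ (q = A' ∨ q = B' ∨ q = C') ∧
             (r = A' ∨ r = B' ∨ r = C')) := by
          unfold wA3
          split_ifs with h1 h2 h3 h4
          · exact absurd ⟨h1, h2⟩ hR
          · exact ⟨_, _, _, rfl, by tauto⟩
          · exact ⟨_, _, _, rfl, by tauto⟩
          · exact ⟨_, _, _, rfl, by tauto⟩
          · exact ⟨_, _, _, rfl, by tauto⟩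
        obtain ⟨p, q, r, hQw, hp, hq, hr⟩ := hQw
        rw [hQw] at hsub
        rcases sub3_w hsub with heq | hsp | hsq | hsr
        · -- wA3 A B C = wA3 A' B' C'
          rw [← hQw] at heq
          by_cases hL : A = B ∧ B = C
          · -- left collapses: A = wA3 A' B' C', and A' ⪯ wA3 A' B' C'
            obtain ⟨rfl1, rfl2⟩ := hL
            have hP : wA3 A B C = A := by subst rfl1; subst rfl2; simp [wA3]
            rw [hP] at heq
            exact ha'a (heq ▸ hsA')
          · rcases noncollapse_eq hL hR heq with h | h | h
            · exact haa' (h ▸ sub3_refl A)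
            · exact hbb' (h ▸ sub3_refl B)
            · exact hcc' (h ▸ sub3_refl C)
        · rcases hp with rfl | rfl | rfl
          · exact haa' (sub3_trans hsA hsp)
          · exact hbb' (sub3_trans hsB hsp)
          · exact hcc' (sub3_trans hsC hsp)
        · rcases hq with rfl | rfl | rfl
          · exact haa' (sub3_trans hsA hsq)
          · exact hbb' (sub3_trans hsB hsq)
          · exact hcc' (sub3_trans hsC hsq)
        · rcases hr with rfl | rfl | rfl
          · exact haa' (sub3_trans hsA hsr)
          · exact hbb' (sub3_trans hsB hsr)
          · exact hcc' (sub3_trans hsC hsr)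
    constructor
    · exact core A B C A' B' C' hnfA hnfB hnfC hnfA' hnfB' hnfC'
        iha.1 iha.2 ihb.1 ihb.2 ihc.1 ihc.2
    · exact core A' B' C' A B C hnfA' hnfB' hnfC' hnfA hnfB hnfC
        iha.2 iha.1 ihb.2 ihb.1 ihc.2 ihc.1

lemma eval_rename {V : Type} (t : Term3 V) (ρ : V → ℕ) (f : Term3 ℕ → Term3 ℕ → Term3 ℕ → Term3 ℕ)
    (σ : ℕ → Term3 ℕ) :
    (t.rename ρ).eval f σ = t.eval f (fun v => σ (ρ v)) := by
  induction t with
  | var v => rfl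
  | w a b c iha ihb ihc => simp [Term3.rename, Term3.eval, iha, ihb, ihc]


/-- For any formal term `t` with `m` variable slots and variables
`x₁,…,xₘ`, `y₁,…,yₘ` with `xᵢ ≠ yᵢ` for every `i`, the identity
`t(x₁,…,xₘ) ≈ t(y₁,…,yₘ)` is not a consequence of the 3-wnu identities: there is an
algebra with one ternary operation satisfying the 3-wnu identities and an assignment of
the variables under which the two sides evaluate to different elements. -/
theorem statement0 {m : ℕ} (t : Term3 (Fin m)) (x y : Fin m → ℕ)
    (hxy : ∀ i, x i ≠ y i) :
    ∃ (B : Type) (f : B → B → B → B) (σ : ℕ → B),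
      Is3WNU f ∧ (t.rename x).eval f σ ≠ (t.rename y).eval f σ := by
  refine ⟨Term3 ℕ, wA3, Term3.var, wA3_is3WNU, ?_⟩
  rw [eval_rename, eval_rename]
  intro h
  exact (key t x y hxy).1 (h ▸ sub3_refl _)
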